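/- Let (A, ·, α, R) be a Hom-associative Rota-Baxter algebra of weight θ with α∘R = R∘α. Define x ≺ y = x·R(y), x ≻ y = R(x)·y, and x • y = θ x·y. Then (A, ≺, ≻, •, α) is a Hom-tridendriform algebra. -/

import Mathlib

/-!
The Rota-Baxter identity says that `R` sends `x ≺ y + x ≻ y + x • y` (`prec`, `succ`, `dot` below)
to `R x · R y`. Together with `α ∘ R = R ∘ α`, this turns each of the seven Hom-tridendriform
axioms into a single instance of Hom-associativity.
-/

structure IsHomTridendriform {A : Type*} [Add A] (prec succ dot : A → A → A) (α : A → A) :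
    Prop where
  prec_prec : ∀ x y z, prec (prec x y) (α z) = prec (α x) (prec y z + succ y z + dot y z)
  succ_prec : ∀ x y z, prec (succ x y) (α z) = succ (α x) (prec y z)
  succ_succ : ∀ x y z, succ (α x) (succ y z) = succ (prec x y + succ x y + dot x y) (α z)
  prec_dot : ∀ x y z, dot (prec x y) (α z) = dot (α x) (succ y z)
  succ_dot : ∀ x y z, dot (succ x y) (α z) = succ (α x) (dot y z)
  dot_prec : ∀ x y z, prec (dot x y) (α z) = dot (α x) (prec y z)
  dot_dot : ∀ x y z, dot (dot x y) (α z) = dot (α x) (dot y z)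

section HomRotaBaxter

variable {K A : Type*} [CommSemiring K] [AddCommMonoid A] [Module K A]

def IsHomAssociative (μ : A →ₗ[K] A →ₗ[K] A) (α : A →ₗ[K] A) : Prop :=
  ∀ x y z, μ (α x) (μ y z) = μ (μ x y) (α z)

def IsRotaBaxter (μ : A →ₗ[K] A →ₗ[K] A) (R : A →ₗ[K] A) (θ : K) : Prop :=
  ∀ x y, μ (R x) (R y) = R (μ (R x) y + μ x (R y) + θ • μ x y)

namespace RotaBaxter

variable (μ : A →ₗ[K] A →ₗ[K] A) (R : A →ₗ[K] A) (θ : K)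

def prec (x y : A) : A := μ x (R y)

def succ (x y : A) : A := μ (R x) y

def dot (x y : A) : A := θ • μ x y

variable {μ R θ}

theorem map_prec_add_succ_add_dot (hR : IsRotaBaxter μ R θ) (x y : A) :
    R (prec μ R x y + succ μ R x y + dot μ θ x y) = μ (R x) (R y) := by
  rw [hR, prec, succ, dot, add_comm (μ x (R y))]

theorem isHomTridendriform {α : A →ₗ[K] A} (hα : IsHomAssociative μ α)
    (hR : IsRotaBaxter μ R θ) (hαR : ∀ x, α (R x) = R (α x)) :
    IsHomTridendriform (prec μ R) (succ μ R) (dot μ θ) α where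
  prec_prec x y z :=
    calc μ (μ x (R y)) (R (α z))
        = μ (μ x (R y)) (α (R z)) := by rw [hαR]
      _ = μ (α x) (μ (R y) (R z)) := (hα _ _ _).symm
      _ = μ (α x) (R (prec μ R y z + succ μ R y z + dot μ θ y z)) := by
        rw [map_prec_add_succ_add_dot hR]
  succ_prec x y z := by
    simp only [prec, succ, ← hαR, hα _ _ _]
  succ_succ x y z :=
    calc μ (R (α x)) (μ (R y) z)
        = μ (α (R x)) (μ (R y) z) := by rw [hαR]
      _ = μ (μ (R x) (R y)) (α z) := hα _ _ _
      _ = μ (R (prec μ R x y + succ μ R x y + dot μ θ x y)) (α z) := by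
        rw [map_prec_add_succ_add_dot hR]
  prec_dot x y z := by
    simp only [prec, succ, dot, hα _ _ _]
  succ_dot x y z := by
    simp only [succ, dot, map_smul, ← hαR, hα _ _ _]
  dot_prec x y z := by
    simp only [prec, dot, map_smul, LinearMap.smul_apply, ← hαR, hα _ _ _]
  dot_dot x y z := by
    simp only [dot, map_smul, LinearMap.smul_apply, hα _ _ _]

end RotaBaxter

end HomRotaBaxter

/-- For a weight-`θ` Hom-associative Rota-Baxter algebra, `x ≺ y = x·R(y)`, `x ≻ y = R(x)·y`,
`x • y = θ x·y` define a Hom-tridendriform algebra. -/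
theorem stmt_17 {K A : Type*} [Field K] [AddCommGroup A] [Module K A]
    (μ : A →ₗ[K] A →ₗ[K] A) (α R : A →ₗ[K] A) (θ : K)
    (hassoc : ∀ x y z : A, μ (α x) (μ y z) = μ (μ x y) (α z))
    (hRB : ∀ x y : A, μ (R x) (R y) = R (μ (R x) y + μ x (R y) + θ • μ x y))
    (hcomm : ∀ x : A, α (R x) = R (α x))
    (p s m : A → A → A)
    (hp : ∀ x y, p x y = μ x (R y)) (hs : ∀ x y, s x y = μ (R x) y)
    (hm : ∀ x y, m x y = θ • μ x y) :
    (∀ x y z : A, p (p x y) (α z) = p (α x) (p y z + s y z + m y z)) ∧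
    (∀ x y z : A, p (s x y) (α z) = s (α x) (p y z)) ∧
    (∀ x y z : A, s (α x) (s y z) = s (p x y + s x y + m x y) (α z)) ∧
    (∀ x y z : A, m (p x y) (α z) = m (α x) (s y z)) ∧
    (∀ x y z : A, m (s x y) (α z) = s (α x) (m y z)) ∧
    (∀ x y z : A, p (m x y) (α z) = m (α x) (p y z)) ∧
    (∀ x y z : A, m (m x y) (α z) = m (α x) (m y z)) := by
  obtain rfl : p = RotaBaxter.prec μ R := funext₂ hp
  obtain rfl : s = RotaBaxter.succ μ R := funext₂ hs
  obtain rfl : m = RotaBaxter.dot μ θ := funext₂ hm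
  have h := RotaBaxter.isHomTridendriform hassoc hRB hcomm
  exact ⟨h.prec_prec, h.succ_prec, h.succ_succ, h.prec_dot, h.succ_dot, h.dot_prec, h.dot_dot⟩
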